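/- arXiv:2211.12603 — 2 statements merged into one kernel-verified Lean document; each statement's English description precedes it below -/
import Mathlib

section
/- For a bipartite (2,0) void-rule CRN, D is reachable from I if and only if there exists a nonnegative integer assignment f on the rules such that for every species s, the sum of f(R) over rules R consuming s equals (I − D)(s). That is, reachability is equivalent to the existence of a nonnegative integer solution to the linear system given by the rule-application counts, with no ordering constraints needed. -/
abbrev Config (Λ : Type*) := Λ → ℕ
abbrev Rule (Λ : Type*) := (Λ → ℕ) × (Λ → ℕ)

def Applicable {Λ : Type*} (R : Rule Λ) (C : Config Λ) : Prop := ∀ i, R.1 i ≤ C i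

def applyRule {Λ : Type*} (R : Rule Λ) (C : Config Λ) : Config Λ :=
  fun i => C i + R.2 i - R.1 i

def Step {Λ : Type*} (Γ : Set (Rule Λ)) (C C' : Config Λ) : Prop :=
  ∃ R ∈ Γ, Applicable R C ∧ C' = applyRule R C

def Reachable {Λ : Type*} (Γ : Set (Rule Λ)) : Config Λ → Config Λ → Prop :=
  Relation.ReflTransGen (Step Γ)

/-!
Void rules only ever consume, so a rule is applicable to `D + r` whenever `r` is its
consumption vector, whatever `D` is. Hence a configuration `D + ∑ i, f i • r i` reaches `D`
by firing each rule `i` exactly `f i` times, in any order; conversely, along any run the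
consumption counts of the fired rules add up to `I - D`.
-/

section VoidRules

variable {Λ ι : Type*}

def voidRules (E : Finset ι) (r : ι → Config Λ) : Set (Rule Λ) :=
  {R | ∃ i ∈ E, R = (r i, 0)}

lemma applyRule_void (r C : Config Λ) : applyRule (r, 0) C = C - r := by
  ext s
  simp [applyRule]

lemma step_void {Γ : Set (Rule Λ)} {r : Config Λ} (hr : (r, 0) ∈ Γ) (C : Config Λ) :
    Step Γ (C + r) C :=
  ⟨(r, 0), hr, fun s => Nat.le_add_left _ _, by rw [applyRule_void, add_tsub_cancel_right]⟩

lemma reachable_add_nsmul_void {Γ : Set (Rule Λ)} {r : Config Λ} (hr : (r, 0) ∈ Γ)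
    (C : Config Λ) (n : ℕ) : Reachable Γ (C + n • r) C := by
  induction n with
  | zero =>
    rw [zero_smul, add_zero]
    exact Relation.ReflTransGen.refl
  | succ n ih =>
    rw [succ_nsmul, ← add_assoc]
    exact Relation.ReflTransGen.head (step_void hr _) ih

lemma reachable_add_sum_void {Γ : Set (Rule Λ)} {E : Finset ι} {r : ι → Config Λ}
    (hE : ∀ i ∈ E, (r i, 0) ∈ Γ) (f : ι → ℕ) (D : Config Λ) :
    Reachable Γ (D + ∑ i ∈ E, f i • r i) D := by
  classical
  induction E using Finset.induction_on with
  | empty =>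
    rw [Finset.sum_empty, add_zero]
    exact Relation.ReflTransGen.refl
  | insert a E ha ih =>
    rw [Finset.sum_insert ha, add_comm (f a • r a), ← add_assoc]
    exact (reachable_add_nsmul_void (hE a (Finset.mem_insert_self a E)) _ (f a)).trans
      (ih fun i hi => hE i (Finset.mem_insert_of_mem hi))

lemma Reachable.exists_eq_add_sum {E : Finset ι} {r : ι → Config Λ} {I D : Config Λ}
    (h : Reachable (voidRules E r) I D) :
    ∃ f : ι → ℕ, (∀ i ∉ E, f i = 0) ∧ D + ∑ i ∈ E, f i • r i = I := by
  classical
  induction h with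
  | refl => exact ⟨0, fun _ _ => rfl, by simp⟩
  | @tail C D _ hstep ih =>
    obtain ⟨f, hf, hfI⟩ := ih
    obtain ⟨_, ⟨i, hi, rfl⟩, happ, rfl⟩ := hstep
    have hC : C - r i + r i = C := tsub_add_cancel_of_le happ
    refine ⟨f + Pi.single i 1, fun j hj => ?_, ?_⟩
    · simp [hf j hj, show j ≠ i by rintro rfl; exact hj hi]
    · simp only [Pi.add_apply, add_smul, Finset.sum_add_distrib, Pi.single_apply, ite_smul,
        one_smul, zero_smul, Finset.sum_ite_eq', if_pos hi, applyRule_void]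
      rw [← hfI, add_comm (∑ j ∈ E, f j • r j) (r i), ← add_assoc, hC]

theorem reachable_voidRules_iff {E : Finset ι} {r : ι → Config Λ} {I D : Config Λ} :
    Reachable (voidRules E r) I D ↔
      ∃ f : ι → ℕ, (∀ i ∉ E, f i = 0) ∧ D + ∑ i ∈ E, f i • r i = I := by
  refine ⟨Reachable.exists_eq_add_sum, ?_⟩
  rintro ⟨f, -, rfl⟩
  exact reachable_add_sum_void (Γ := voidRules E r) (fun i hi => ⟨i, hi, rfl⟩) f D

end VoidRules

/-- for a bipartite (2,0) void-rule CRN (species `A ⊕ B`, rules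
`x + y → ∅` for `(x,y) ∈ E ⊆ A × B`), `D` is reachable from `I` iff there is a
nonnegative integer assignment `f` on the rules such that for every species `s`, the
total consumption of `s` over all rule applications equals `(I - D)(s)` — no ordering
constraints are needed. -/
theorem stmt12 {A B : Type*} [DecidableEq A] [DecidableEq B]
    (E : Finset (A × B)) (I D : Config (A ⊕ B)) (hID : ∀ i, D i ≤ I i) :
    Reachable {R : Rule (A ⊕ B) | ∃ p ∈ E,
        R = ((Pi.single (Sum.inl p.1) 1 + Pi.single (Sum.inr p.2) 1 : (A ⊕ B) → ℕ),
             fun _ => 0)} I D ↔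
      ∃ f : A × B → ℕ, (∀ p ∉ E, f p = 0) ∧
        ∀ s, ∑ p ∈ E,
            f p * (Pi.single (Sum.inl p.1) 1 + Pi.single (Sum.inr p.2) 1 : (A ⊕ B) → ℕ) s
          = I s - D s := by
  refine (reachable_voidRules_iff (E := E)
    (r := fun p => Pi.single (Sum.inl p.1) 1 + Pi.single (Sum.inr p.2) 1)).trans ?_
  refine exists_congr fun f => and_congr_right fun _ => ?_
  simp only [funext_iff, Pi.add_apply, Finset.sum_apply, Pi.smul_apply, smul_eq_mul]
  exact forall_congr' fun s => by
    rw [eq_tsub_iff_add_eq_of_le (hID s), add_comm]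
end

section
/- Consider the CRN reduction from 3DM with relaxed species-based source/consume bounds: species Λ = {S_v : v ∈ X ∪ Y ∪ Z} ∪ {a}, rules Γ = { S_x + S_y + S_z → a : (x,y,z) ∈ T }, initial configuration I with count 1 on each S_v and 0 on a, target D with count 0 on each S_v and count n = |X| on a. Then D is reachable from I if and only if the 3DM instance (X, Y, Z, T) has a perfect matching. Moreover, this CRN is feed-forward (species a is never a reactant) and contains no void or autogenesis rules. -/
/-- A finite rule set is feed-forward if it admits an ordering (a duplicate-free list
enumerating it) such that products of any rule never occur as reactants of earlier
rules. -/
def FeedForward {Λ : Type*} (Γ : Finset (Rule Λ)) : Prop :=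
  ∃ l : List (Rule Λ), l.Nodup ∧ (∀ R, R ∈ l ↔ R ∈ Γ) ∧
    l.Pairwise (fun Re Rl => ∀ i, Rl.2 i > 0 → Re.1 i = 0)

/-- Species: `S_v` for `v ∈ X ∪ Y ∪ Z` (the `Sum.inl` part) and the extra species `a`
(the `Sum.inr` part). -/
abbrev Sp19 (X Y Z : Type*) := (X ⊕ Y ⊕ Z) ⊕ Unit

/-- Reactants of the rule `S_x + S_y + S_z → a` for a hyperedge `t = (x,y,z)`. -/
def r19r {X Y Z : Type*} [DecidableEq X] [DecidableEq Y] [DecidableEq Z]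
    (t : X × Y × Z) : Sp19 X Y Z → ℕ
  | Sum.inl (Sum.inl x) => if x = t.1 then 1 else 0
  | Sum.inl (Sum.inr (Sum.inl y)) => if y = t.2.1 then 1 else 0
  | Sum.inl (Sum.inr (Sum.inr z)) => if z = t.2.2 then 1 else 0
  | Sum.inr _ => 0

/-- Products of the rule `S_x + S_y + S_z → a`: one copy of `a`. -/
def r19p {X Y Z : Type*} : Sp19 X Y Z → ℕ
  | Sum.inl _ => 0
  | Sum.inr _ => 1

open Classical in
/-- The rule set `{ S_x + S_y + S_z → a : (x,y,z) ∈ T }`. -/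
noncomputable def Γ19 {X Y Z : Type*} [DecidableEq X] [DecidableEq Y] [DecidableEq Z]
    (T : Finset (X × Y × Z)) : Finset (Rule (Sp19 X Y Z)) :=
  T.image (fun t => ((r19r t, r19p) : Rule (Sp19 X Y Z)))

/-- Initial configuration: one copy of each `S_v`, zero copies of `a`. -/
def I19 {X Y Z : Type*} : Config (Sp19 X Y Z)
  | Sum.inl _ => 1
  | Sum.inr _ => 0

/-- Target configuration: zero copies of each `S_v`, `n` copies of `a`. -/
def D19 {X Y Z : Type*} (n : ℕ) : Config (Sp19 X Y Z)
  | Sum.inl _ => 0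
  | Sum.inr _ => n

/-!
A run of the network is determined, up to order, by the multiset `m` of hyperedges whose rules
fire, and the final configuration `C'` satisfies `C' + ∑_{t ∈ m} reactants t = I19 + |m| • a`.
Reaching `D19 n` therefore forces every `S_v` to be consumed exactly once, so `m` is a perfect
matching. Conversely, the reactants of a perfect matching sum to exactly `I19`, and a multiset of
rules whose total demand is available can be fired in any order, since each firing consumes only
its own share of that demand. The only product, `a`, is never a reactant.
-/

section Firing

variable {Λ ι : Type*}

lemma applyRule_add_fst {R : Rule Λ} {C : Config Λ} (h : Applicable R C) :
    applyRule R C + R.1 = C + R.2 := by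
  funext i
  have := h i
  simp only [applyRule, Pi.add_apply]
  omega

lemma Reachable.exists_firings {f : ι → Rule Λ} {s : Set ι} {C C' : Config Λ}
    (h : Reachable (f '' s) C C') :
    ∃ m : Multiset ι, (∀ t ∈ m, t ∈ s) ∧
      C' + (m.map fun t => (f t).1).sum = C + (m.map fun t => (f t).2).sum := by
  induction h with
  | refl => exact ⟨0, by simp, by simp⟩
  | tail _ hstep ih =>
    obtain ⟨m, hms, hm⟩ := ih
    obtain ⟨_, ⟨t, hts, rfl⟩, happ, rfl⟩ := hstep
    refine ⟨t ::ₘ m, Multiset.forall_mem_cons.2 ⟨hts, hms⟩, ?_⟩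
    simp only [Multiset.map_cons, Multiset.sum_cons]
    rw [← add_assoc, applyRule_add_fst happ, add_right_comm, hm]
    abel

lemma exists_reachable_of_sum_fst_le {f : ι → Rule Λ} {s : Set ι} {m : Multiset ι}
    (hms : ∀ t ∈ m, t ∈ s) {C : Config Λ} (hC : (m.map fun t => (f t).1).sum ≤ C) :
    ∃ C', Reachable (f '' s) C C' ∧
      C' + (m.map fun t => (f t).1).sum = C + (m.map fun t => (f t).2).sum := by
  induction m using Multiset.induction generalizing C with
  | empty => exact ⟨C, .refl, by simp⟩
  | cons t m ih =>
    rw [Multiset.forall_mem_cons] at hms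
    simp only [Multiset.map_cons, Multiset.sum_cons] at hC ⊢
    have happ : Applicable (f t) C := fun i => (Nat.le_add_right _ _).trans (hC i)
    have hC' : (m.map fun t => (f t).1).sum ≤ applyRule (f t) C := fun i => by
      have := hC i
      simp only [applyRule, Pi.add_apply] at this ⊢
      omega
    obtain ⟨C', hreach, hC'eq⟩ := ih hms.2 hC'
    refine ⟨C', .head ⟨f t, ⟨t, hms.1, rfl⟩, happ, rfl⟩ hreach, ?_⟩
    rw [add_left_comm, hC'eq, ← add_assoc, add_comm _ (applyRule _ _), applyRule_add_fst happ]
    abel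

lemma feedForward_of_no_product_consumed {Γ : Finset (Rule Λ)}
    (h : ∀ R ∈ Γ, ∀ R' ∈ Γ, ∀ i, 0 < R'.2 i → R.1 i = 0) : FeedForward Γ :=
  ⟨Γ.toList, Γ.nodup_toList, fun _ => Finset.mem_toList,
    List.pairwise_of_forall_mem_list fun _ hR _ hR' =>
      h _ (Finset.mem_toList.1 hR) _ (Finset.mem_toList.1 hR')⟩

end Firing

lemma Multiset.sum_map_boole_eq_countP {α : Type*} (m : Multiset α) (p : α → Prop)
    [DecidablePred p] : (m.map fun a => if p a then 1 else 0).sum = m.countP p := by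
  induction m using Multiset.induction with
  | empty => simp
  | cons a m ih =>
    rw [Multiset.map_cons, Multiset.sum_cons, Multiset.countP_cons, ih]
    split_ifs <;> omega

lemma Multiset.existsUnique_mem_toFinset_of_countP_eq_one {α : Type*} [DecidableEq α]
    {m : Multiset α} {p : α → Prop} [DecidablePred p] (h : m.countP p = 1) :
    ∃! a, a ∈ m.toFinset ∧ p a := by
  rw [Multiset.countP_eq_card_filter, Multiset.card_eq_one] at h
  obtain ⟨a, ha⟩ := h
  refine ⟨a, ?_, fun b hb => ?_⟩ <;> simp_all [← Multiset.mem_filter]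

lemma Finset.countP_val_eq_one_of_existsUnique {α : Type*} {s : Finset α} {p : α → Prop}
    [DecidablePred p] (h : ∃! a, a ∈ s ∧ p a) : s.val.countP p = 1 := by
  rw [Multiset.countP_eq_card_filter, ← Finset.filter_val, Finset.card_val,
    Finset.card_eq_one_iff_existsUnique]
  simpa only [Finset.mem_filter] using h

section ThreeDM

variable {X Y Z : Type*}

def IsPerfect3DMatching (M : Finset (X × Y × Z)) : Prop :=
  (∀ x : X, ∃! t, t ∈ M ∧ t.1 = x) ∧ (∀ y : Y, ∃! t, t ∈ M ∧ t.2.1 = y) ∧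
    (∀ z : Z, ∃! t, t ∈ M ∧ t.2.2 = z)

lemma IsPerfect3DMatching.card_eq [Fintype X] {M : Finset (X × Y × Z)}
    (hM : IsPerfect3DMatching M) : M.card = Fintype.card X := by
  rw [← Finset.card_univ]
  refine Finset.card_nbij (·.1) (fun _ _ => Finset.mem_univ _) ?_ ?_
  · intro s hs t ht hst
    obtain ⟨u, -, hu⟩ := hM.1 t.1
    rw [hu s ⟨hs, hst⟩, hu t ⟨ht, rfl⟩]
  · intro x _
    obtain ⟨t, ⟨htM, rfl⟩, -⟩ := hM.1 x
    exact ⟨t, htM, rfl⟩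

variable [DecidableEq X] [DecidableEq Y] [DecidableEq Z]

lemma coe_Γ19 (T : Finset (X × Y × Z)) :
    (↑(Γ19 T) : Set (Rule (Sp19 X Y Z))) = (fun t => (r19r t, r19p)) '' ↑T := by
  classical exact Finset.coe_image

lemma mem_Γ19 {T : Finset (X × Y × Z)} {R : Rule (Sp19 X Y Z)} :
    R ∈ Γ19 T ↔ ∃ t ∈ T, (r19r t, r19p) = R := by
  classical exact Finset.mem_image

lemma sum_map_r19r_eq_I19_iff (m : Multiset (X × Y × Z)) :
    (m.map r19r).sum = I19 ↔
      (∀ x, m.countP (·.1 = x) = 1) ∧ (∀ y, m.countP (·.2.1 = y) = 1) ∧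
        (∀ z, m.countP (·.2.2 = z) = 1) := by
  simp only [funext_iff, Sum.forall, Pi.multiset_sum_apply, Multiset.map_map, Function.comp_def,
    r19r, I19, Multiset.sum_map_boole_eq_countP, eq_comm (a := (_ : X)),
    eq_comm (a := (_ : Y)), eq_comm (a := (_ : Z))]
  simp

lemma isPerfect3DMatching_of_reachable {T : Finset (X × Y × Z)} {n : ℕ}
    (h : Reachable (↑(Γ19 T) : Set (Rule (Sp19 X Y Z))) I19 (D19 n)) :
    ∃ M, M ⊆ T ∧ IsPerfect3DMatching M := by
  rw [coe_Γ19] at h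
  obtain ⟨m, hmT, hm⟩ := h.exists_firings
  have hsum : (m.map r19r).sum = I19 := by
    funext i
    have := congrFun hm i
    rcases i with v | _
    · simpa [Pi.multiset_sum_apply, Function.comp_def, D19, I19, r19p] using this
    · simp [Pi.multiset_sum_apply, Function.comp_def, I19, r19r]
  obtain ⟨hx, hy, hz⟩ := (sum_map_r19r_eq_I19_iff m).1 hsum
  exact ⟨m.toFinset, fun t ht => hmT t (Multiset.mem_toFinset.1 ht),
    fun x => Multiset.existsUnique_mem_toFinset_of_countP_eq_one (hx x),
    fun y => Multiset.existsUnique_mem_toFinset_of_countP_eq_one (hy y),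
    fun z => Multiset.existsUnique_mem_toFinset_of_countP_eq_one (hz z)⟩

lemma reachable_of_isPerfect3DMatching {T M : Finset (X × Y × Z)} (hMT : M ⊆ T)
    (hM : IsPerfect3DMatching M) :
    Reachable (↑(Γ19 T) : Set (Rule (Sp19 X Y Z))) I19 (D19 M.card) := by
  have hsum : (M.val.map r19r).sum = I19 := (sum_map_r19r_eq_I19_iff _).2
    ⟨fun x => Finset.countP_val_eq_one_of_existsUnique (hM.1 x),
      fun y => Finset.countP_val_eq_one_of_existsUnique (hM.2.1 y),
      fun z => Finset.countP_val_eq_one_of_existsUnique (hM.2.2 z)⟩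
  obtain ⟨C, hreach, hC⟩ := exists_reachable_of_sum_fst_le (f := fun t => (r19r t, r19p))
    (fun _ ht => hMT ht) hsum.le
  have : C = D19 M.card := by
    simp only [hsum, Multiset.map_const', Multiset.sum_replicate, add_comm I19] at hC
    funext i
    have := congrFun (add_right_cancel hC) i
    rcases i with _ | _ <;> simpa [D19, r19p] using this
  rwa [coe_Γ19, ← this]

end ThreeDM

theorem stmt19_general {X Y Z : Type*} [Fintype X]
    [DecidableEq X] [DecidableEq Y] [DecidableEq Z]
    (T : Finset (X × Y × Z)) :
    (Reachable (↑(Γ19 T) : Set (Rule (Sp19 X Y Z))) I19 (D19 (Fintype.card X)) ↔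
      ∃ M : Finset (X × Y × Z), M ⊆ T ∧
        (∀ x : X, ∃! t, t ∈ M ∧ t.1 = x) ∧
        (∀ y : Y, ∃! t, t ∈ M ∧ t.2.1 = y) ∧
        (∀ z : Z, ∃! t, t ∈ M ∧ t.2.2 = z)) ∧
    FeedForward (Γ19 T) ∧
    (∀ R ∈ Γ19 T, ¬ (∀ i, R.2 i ≤ R.1 i)) ∧
    (∀ R ∈ Γ19 T, ¬ (∀ i, R.1 i ≤ R.2 i)) := by
  refine ⟨⟨isPerfect3DMatching_of_reachable, ?_⟩, ?_, ?_, ?_⟩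
  · rintro ⟨M, hMT, hM⟩
    exact IsPerfect3DMatching.card_eq hM ▸ reachable_of_isPerfect3DMatching hMT hM
  · refine feedForward_of_no_product_consumed fun R hR R' hR' i hi => ?_
    obtain ⟨t, -, rfl⟩ := mem_Γ19.1 hR
    obtain ⟨t', -, rfl⟩ := mem_Γ19.1 hR'
    rcases i with _ | _
    · simp [r19p] at hi
    · rfl
  · intro R hR h
    obtain ⟨t, -, rfl⟩ := mem_Γ19.1 hR
    simpa [r19r, r19p] using h (Sum.inr ())
  · intro R hR h
    obtain ⟨t, -, rfl⟩ := mem_Γ19.1 hR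
    simpa [r19r, r19p] using h (Sum.inl (Sum.inl t.1))

/-- for a 3DM instance `(X, Y, Z, T)` with `|X| = |Y| = |Z| = n`, the
target configuration (`n` copies of `a`, nothing else) is reachable from the initial
configuration (one copy of each `S_v`) under the rules `S_x + S_y + S_z → a`, `t ∈ T`,
iff the instance has a perfect matching; moreover this CRN is feed-forward and contains
no void rules and no autogenesis rules. -/
theorem stmt19 {X Y Z : Type*} [Fintype X] [Fintype Y] [Fintype Z]
    [DecidableEq X] [DecidableEq Y] [DecidableEq Z]
    (hXY : Fintype.card X = Fintype.card Y) (hYZ : Fintype.card Y = Fintype.card Z)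
    (T : Finset (X × Y × Z)) :
    (Reachable (↑(Γ19 T) : Set (Rule (Sp19 X Y Z))) I19 (D19 (Fintype.card X)) ↔
      ∃ M : Finset (X × Y × Z), M ⊆ T ∧
        (∀ x : X, ∃! t, t ∈ M ∧ t.1 = x) ∧
        (∀ y : Y, ∃! t, t ∈ M ∧ t.2.1 = y) ∧
        (∀ z : Z, ∃! t, t ∈ M ∧ t.2.2 = z)) ∧
    FeedForward (Γ19 T) ∧
    (∀ R ∈ Γ19 T, ¬ (∀ i, R.2 i ≤ R.1 i)) ∧
    (∀ R ∈ Γ19 T, ¬ (∀ i, R.1 i ≤ R.2 i)) :=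
  stmt19_general T
end
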